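/- Characterization of densities with vanishing Dirichlet form: let Λ = {−l,…,l}^d with l ≥ 1, p : Λ → [a,b], φ > 0, and ν^{Λ,p}_φ := ⊗_{x∈Λ} ν¹_{φ/p_x}. For f : ℕ^Λ → [0,∞), the Dirichlet form D(f) := Σ_{(x,y): x,y∈Λ, x∼y} (1/2)·∫ p_x·g(η(x))·(√(f(η^{x,y})) − √(f(η)))² dν^{Λ,p}_φ(η) vanishes, D(f) = 0, if and only if f is constant along all hyperplanes of a given number of particles, i.e., f(η) = f(ξ) whenever Σ_{x∈Λ} η(x) = Σ_{x∈Λ} ξ(x). -/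

import Mathlib

open scoped BigOperators
open MeasureTheory

/-- The "generalized factorial" `g(n)! = g(1)·g(2)···g(n)`, with `g(0)! = 1`. -/
noncomputable def gfact (g : ℕ → ℝ) (n : ℕ) : ℝ := ∏ i ∈ Finset.Icc 1 n, g i

/-- The partition function `Z(φ) = Σ_{n≥0} φⁿ/g(n)!`. -/
noncomputable def Zfun (g : ℕ → ℝ) (φ : ℝ) : ℝ := ∑' n : ℕ, φ ^ n / gfact g n

/-- The one-site marginal `ν¹_φ(n) = φⁿ/(Z(φ)·g(n)!)`. -/
noncomputable def nu1 (g : ℕ → ℝ) (φ : ℝ) (n : ℕ) : ℝ := φ ^ n / (Zfun g φ * gfact g n)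

/-- The one-site marginal `ν¹_φ` as a measure on `ℕ`. -/
noncomputable def nuM (g : ℕ → ℝ) (φ : ℝ) : Measure ℕ :=
  Measure.sum fun n => (ENNReal.ofReal (nu1 g φ n)) • Measure.dirac n

/-- Sites of the box `Λ = {−l,…,l}^d ⊂ ℤ^d`. -/
abbrev BoxSite (d l : ℕ) := Fin d → {z : ℤ // z ∈ Finset.Icc (-(l : ℤ)) (l : ℤ)}

/-- Nearest neighbors in the box: `x ∼ y` iff `|x − y| = 1`. -/
def nbrBox {d l : ℕ} (x y : BoxSite d l) : Prop :=
  (∑ i, |(x i : ℤ) - (y i : ℤ)|) = 1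

/-- The configuration `η^{x,y}` obtained from `η` after one particle jumps from `x` to `y`. -/
def move {T : Type*} [DecidableEq T] (η : T → ℕ) (x y : T) : T → ℕ :=
  Function.update (Function.update η x (η x - 1)) y (η y + 1)

open Classical in
/-- The Dirichlet form on the box,
`D(f) = Σ_{(x,y): x∼y} (1/2)·∫ p_x·g(η(x))·(√(f(η^{x,y})) − √(f(η)))² dν^{Λ,p}_φ(η)`,
with values in `[0,∞]`. -/
noncomputable def dirBox {d l : ℕ} (g : ℕ → ℝ) (p : BoxSite d l → ℝ) (φ : ℝ)
    (f : (BoxSite d l → ℕ) → ℝ) : ENNReal :=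
  ∑ x, ∑ y, if nbrBox x y then
    (1 / 2) * ∫⁻ η, ENNReal.ofReal
      (p x * g (η x) * (Real.sqrt (f (move η x y)) - Real.sqrt (f η)) ^ 2)
      ∂(Measure.pi fun z => nuM g (φ / p z))
    else 0

/-!
If `D(f) = 0`, every summand vanishes. The product measure charges every configuration and
`p_x g(η(x)) > 0` exactly when `η(x) ≥ 1` (here `g(0) = 0` matters), so `D(f) = 0` says precisely
that `f(η^{x,y}) = f(η)` for every nearest-neighbour jump `x → y` that is possible from `η`.
Jumps preserve the number of particles, and conversely any configuration is joined by jumps to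
the one with all its particles at the origin: a jump towards the origin lowers the total
ℓ¹-distance `Σ_z η(z)|z|` of the particles to the origin by one.
-/

section Move
variable {T : Type*} [DecidableEq T]

lemma move_add_single {η : T → ℕ} {x y : T} (hxy : x ≠ y) (hx : 1 ≤ η x) :
    move η x y + Pi.single x 1 = η + Pi.single y 1 := by
  ext z
  rcases eq_or_ne z y with rfl | hzy
  · simp [move, hxy.symm]
  · rcases eq_or_ne z x with rfl | hzx
    · simp only [move, Pi.add_apply, Function.update_of_ne hzy, Function.update_self,
        Pi.single_eq_same, Pi.single_eq_of_ne hzy, add_zero]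
      omega
    · simp [move, hzy, hzx]

variable [Fintype T]

lemma sum_move_mul_add {η : T → ℕ} {x y : T} (hxy : x ≠ y) (hx : 1 ≤ η x) (w : T → ℕ) :
    ∑ z, move η x y z * w z + w x = ∑ z, η z * w z + w y := by
  simpa [add_mul, Finset.sum_add_distrib, Pi.single_apply] using
    congrArg (fun ζ : T → ℕ => ∑ z, ζ z * w z) (move_add_single hxy hx)

lemma sum_move {η : T → ℕ} {x y : T} (hxy : x ≠ y) (hx : 1 ≤ η x) :
    ∑ z, move η x y z = ∑ z, η z := by
  simpa using sum_move_mul_add hxy hx 1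

theorem apply_eq_apply_single_of_move_invariant {α : Type*} {r : T → T → Prop} (o : T)
    (h : T → ℕ) (h_eq_zero : ∀ z, h z = 0 → z = o)
    (exists_step : ∀ x, h x ≠ 0 → ∃ y, r x y ∧ h x = h y + 1)
    {f : (T → ℕ) → α} (hf : ∀ x y η, r x y → 1 ≤ η x → f (move η x y) = f η) (η : T → ℕ) :
    f η = f (Pi.single o (∑ z, η z)) := by
  by_cases hη : ∃ x, η x ≠ 0 ∧ h x ≠ 0
  · obtain ⟨x, hηx, hx⟩ := hη
    obtain ⟨y, hxy, hh⟩ := exists_step x hx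
    have hne : x ≠ y := by rintro rfl; omega
    have h1 : 1 ≤ η x := Nat.one_le_iff_ne_zero.2 hηx
    -- with `hh`, this says the potential `∑ z, η z * h z` drops by one along the jump
    have hdec := sum_move_mul_add hne h1 h
    rw [← hf x y η hxy h1,
      apply_eq_apply_single_of_move_invariant o h h_eq_zero exists_step hf (move η x y),
      sum_move hne h1]
  · push Not at hη
    have hsupp : ∀ z, z ≠ o → η z = 0 := fun z hz => by_contra fun h' => hz (h_eq_zero z (hη z h'))
    have hη_single : η = Pi.single o (η o) := by
      ext z
      rcases eq_or_ne z o with rfl | hz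
      · simp
      · simp [hz, hsupp z hz]
    rw [Finset.sum_eq_single o (fun z _ hz => hsupp z hz) (by simp)]
    conv_lhs => rw [hη_single]
termination_by ∑ z, η z * h z
decreasing_by omega

end Move

section Box
variable {d l : ℕ}

def boxOrigin : BoxSite d l := fun _ => ⟨0, by simp⟩

def boxNorm (z : BoxSite d l) : ℕ := ∑ i, (z i : ℤ).natAbs

lemma eq_boxOrigin_of_boxNorm_eq_zero {z : BoxSite d l} (hz : boxNorm z = 0) : z = boxOrigin := by
  funext i
  have := Finset.sum_eq_zero_iff.mp hz i (Finset.mem_univ i)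
  exact Subtype.ext (by simpa [boxOrigin] using this)

lemma exists_nbrBox_boxNorm_eq_succ {x : BoxSite d l} (hx : boxNorm x ≠ 0) :
    ∃ y, nbrBox x y ∧ boxNorm x = boxNorm y + 1 := by
  obtain ⟨i, hi⟩ : ∃ i, (x i : ℤ) ≠ 0 := by
    by_contra! h
    exact hx (Finset.sum_eq_zero fun i _ => by simp [h i])
  have hxi := Finset.mem_Icc.mp (x i).2
  set w : ℤ := if 0 < (x i : ℤ) then x i - 1 else x i + 1 with hw
  have hw_mem : w ∈ Finset.Icc (-(l : ℤ)) l := by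
    rw [Finset.mem_Icc, hw]; split <;> omega
  refine ⟨Function.update x i ⟨w, hw_mem⟩, ?_, ?_⟩
  · rw [nbrBox, Finset.sum_eq_single i (fun j _ hj => by simp [hj]) (by simp)]
    have hstep : |(x i : ℤ) - w| = 1 := by
      rw [hw]; split <;> simp
    rwa [Function.update_self]
  · have hnorm : boxNorm (Function.update x i ⟨w, hw_mem⟩)
        = ∑ j, Function.update (fun j => (x j : ℤ).natAbs) i w.natAbs j := by
      refine Finset.sum_congr rfl fun j _ => ?_
      rcases eq_or_ne j i with rfl | hj <;> simp [*]
    have habs : w.natAbs + 1 = (x i : ℤ).natAbs := by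
      rw [hw]; split <;> omega
    rw [hnorm, Finset.sum_update_of_mem (Finset.mem_univ i), boxNorm,
      Fintype.sum_eq_add_sum_compl i, Finset.compl_eq_univ_sdiff]
    omega

theorem eq_of_sum_eq_of_nbrBox_move_invariant {α : Type*} {f : (BoxSite d l → ℕ) → α}
    (hf : ∀ x y η, nbrBox x y → 1 ≤ η x → f (move η x y) = f η) {η ξ : BoxSite d l → ℕ}
    (hηξ : ∑ z, η z = ∑ z, ξ z) : f η = f ξ := by
  have key := apply_eq_apply_single_of_move_invariant boxOrigin boxNorm
    (fun _ => eq_boxOrigin_of_boxNorm_eq_zero) (fun _ => exists_nbrBox_boxNorm_eq_succ) hf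
  rw [key η, key ξ, hηξ]

lemma ne_of_nbrBox {x y : BoxSite d l} (hxy : nbrBox x y) : x ≠ y := by
  rintro rfl
  simp [nbrBox] at hxy

end Box

section Measure
variable {g : ℕ → ℝ} {g₀ : ℝ}

lemma pos_of_linear_growth (hg₀ : 0 < g₀) (hlin : ∀ n : ℕ, g₀ * n ≤ g n) {n : ℕ} (hn : n ≠ 0) :
    0 < g n :=
  (mul_pos hg₀ (Nat.cast_pos.2 (Nat.pos_of_ne_zero hn))).trans_le (hlin n)

lemma gfact_pos (hg₀ : 0 < g₀) (hlin : ∀ n : ℕ, g₀ * n ≤ g n) (n : ℕ) : 0 < gfact g n :=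
  Finset.prod_pos fun i hi => pos_of_linear_growth hg₀ hlin (by simp at hi; omega)

lemma pow_mul_factorial_le_gfact (hg₀ : 0 ≤ g₀) (hlin : ∀ n : ℕ, g₀ * n ≤ g n) (n : ℕ) :
    g₀ ^ n * n.factorial ≤ gfact g n := by
  calc g₀ ^ n * n.factorial = ∏ i ∈ Finset.Icc 1 n, g₀ * (i : ℝ) := by
        rw [Finset.prod_mul_distrib, Finset.prod_const, Nat.card_Icc, Nat.add_sub_cancel,
          ← Nat.cast_prod, ← Finset.Ico_add_one_right_eq_Icc, Finset.prod_Ico_id_eq_factorial]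
    _ ≤ gfact g n := Finset.prod_le_prod (fun i _ => by positivity) (fun i _ => hlin i)

lemma summable_pow_div_gfact (hg₀ : 0 < g₀) (hlin : ∀ n : ℕ, g₀ * n ≤ g n) (ψ : ℝ) :
    Summable fun n => ψ ^ n / gfact g n := by
  refine (Real.summable_pow_div_factorial (|ψ| / g₀)).of_norm_bounded fun n => ?_
  simp only [norm_div, norm_pow, Real.norm_eq_abs]
  rw [abs_of_pos (gfact_pos hg₀ hlin n), div_pow, div_div]
  exact div_le_div_of_nonneg_left (by positivity) (by positivity)
    (pow_mul_factorial_le_gfact hg₀.le hlin n)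

lemma one_le_Zfun (hg₀ : 0 < g₀) (hlin : ∀ n : ℕ, g₀ * n ≤ g n) {ψ : ℝ} (hψ : 0 ≤ ψ) :
    1 ≤ Zfun g ψ := by
  rw [Zfun]
  simpa [gfact] using (summable_pow_div_gfact hg₀ hlin ψ).le_tsum 0
    fun n _ => div_nonneg (pow_nonneg hψ n) (gfact_pos hg₀ hlin n).le

lemma nu1_pos (hg₀ : 0 < g₀) (hlin : ∀ n : ℕ, g₀ * n ≤ g n) {ψ : ℝ} (hψ : 0 < ψ) (n : ℕ) :
    0 < nu1 g ψ n :=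
  div_pos (pow_pos hψ n)
    (mul_pos (zero_lt_one.trans_le (one_le_Zfun hg₀ hlin hψ.le)) (gfact_pos hg₀ hlin n))

lemma nuM_apply (ψ : ℝ) (s : Set ℕ) :
    nuM g ψ s = ∑' n, s.indicator (fun n => ENNReal.ofReal (nu1 g ψ n)) n := by
  rw [nuM, Measure.sum_apply _ (MeasurableSet.of_discrete)]
  congr 1 with n
  by_cases hn : n ∈ s <;> simp [hn]

lemma nuM_singleton (ψ : ℝ) (n : ℕ) : nuM g ψ {n} = ENNReal.ofReal (nu1 g ψ n) := by
  rw [nuM_apply, tsum_eq_single n fun m hm => by simp [hm]]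
  simp

lemma isProbabilityMeasure_nuM (hg₀ : 0 < g₀) (hlin : ∀ n : ℕ, g₀ * n ≤ g n) {ψ : ℝ}
    (hψ : 0 ≤ ψ) : IsProbabilityMeasure (nuM g ψ) := by
  have hZ := one_le_Zfun hg₀ hlin hψ
  have hsum : HasSum (nu1 g ψ) 1 := by
    have hnu1 : nu1 g ψ = fun n => ψ ^ n / gfact g n / Zfun g ψ := by
      ext n
      rw [nu1, div_div, mul_comm]
    have := (summable_pow_div_gfact hg₀ hlin ψ).hasSum.div_const (Zfun g ψ)
    rwa [← Zfun, div_self (by positivity), ← hnu1] at this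
  constructor
  rw [nuM_apply, Set.indicator_univ, ← ENNReal.ofReal_tsum_of_nonneg
    (fun n => ?_) hsum.summable, hsum.tsum_eq, ENNReal.ofReal_one]
  exact div_nonneg (pow_nonneg hψ n) (mul_nonneg (by positivity) (gfact_pos hg₀ hlin n).le)

lemma pi_nuM_singleton_ne_zero {ι : Type*} [Fintype ι] (hg₀ : 0 < g₀)
    (hlin : ∀ n : ℕ, g₀ * n ≤ g n) {ψ : ι → ℝ} (hψ : ∀ i, 0 < ψ i) (η : ι → ℕ) :
    Measure.pi (fun i => nuM g (ψ i)) {η} ≠ 0 := by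
  have := fun i => isProbabilityMeasure_nuM hg₀ hlin (hψ i).le
  rw [← Set.univ_pi_singleton, Measure.pi_pi, Finset.prod_ne_zero_iff]
  intro i _
  simpa [nuM_singleton] using nu1_pos hg₀ hlin (hψ i) (η i)

end Measure

lemma lintegral_eq_zero_iff_of_measure_singleton_ne_zero {Ω : Type*} [MeasurableSpace Ω]
    [Countable Ω] [MeasurableSingletonClass Ω] {μ : Measure Ω} (hμ : ∀ ω, μ {ω} ≠ 0)
    {F : Ω → ENNReal} : ∫⁻ ω, F ω ∂μ = 0 ↔ ∀ ω, F ω = 0 := by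
  simp [lintegral_countable', hμ]

lemma ofReal_mul_sq_sub_sqrt_eq_zero_iff {w u v : ℝ} (hw : 0 ≤ w) (hu : 0 ≤ u) (hv : 0 ≤ v) :
    ENNReal.ofReal (w * (√u - √v) ^ 2) = 0 ↔ w = 0 ∨ u = v := by
  rw [ENNReal.ofReal_eq_zero, ← Real.sqrt_inj hu hv, ← sub_eq_zero (a := √u)]
  constructor
  · intro h
    by_contra! hne
    have hw' : 0 < w := hw.lt_of_ne' hne.1
    have hsq : 0 < (√u - √v) ^ 2 := sq_pos_of_ne_zero hne.2
    exact h.not_gt (mul_pos hw' hsq)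
  · rintro (h | h) <;> simp [h]

theorem dirBox_eq_zero_iff {d l : ℕ} {g : ℕ → ℝ} {g₀ : ℝ} (hg₀ : 0 < g₀) (hgzero : g 0 = 0)
    (hlin : ∀ n : ℕ, g₀ * n ≤ g n) {p : BoxSite d l → ℝ} (hp : ∀ x, 0 < p x) {φ : ℝ} (hφ : 0 < φ)
    {f : (BoxSite d l → ℕ) → ℝ} (hf : ∀ η, 0 ≤ f η) :
    dirBox g p φ f = 0 ↔ ∀ x y, nbrBox x y → ∀ η, η x = 0 ∨ f (move η x y) = f η := by
  have hg_eq_zero : ∀ n, g n = 0 ↔ n = 0 := fun n =>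
    ⟨fun h => by_contra fun hn => (pos_of_linear_growth hg₀ hlin hn).ne' h, fun h => h ▸ hgzero⟩
  have hg_nonneg : ∀ n, 0 ≤ g n := fun n => (mul_nonneg hg₀.le n.cast_nonneg).trans (hlin n)
  have hμ := pi_nuM_singleton_ne_zero hg₀ hlin fun z => div_pos hφ (hp z)
  simp only [dirBox, Finset.sum_eq_zero_iff, Finset.mem_univ, true_implies, ite_eq_right_iff,
    mul_eq_zero, one_div, ENNReal.inv_eq_zero, ENNReal.ofNat_ne_top, false_or,
    lintegral_eq_zero_iff_of_measure_singleton_ne_zero hμ]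
  refine forall₂_congr fun x y => imp_congr_right fun _ => forall_congr' fun η => ?_
  rw [ofReal_mul_sq_sub_sqrt_eq_zero_iff (mul_nonneg (hp x).le (hg_nonneg (η x))) (hf _) (hf _),
    mul_eq_zero, or_iff_right (hp x).ne', hg_eq_zero]

theorem vanishing_dirichlet_form_iff_general
    (g : ℕ → ℝ) (g₀ : ℝ) (hg₀ : 0 < g₀)
    (hgzero : g 0 = 0)
    (hlin : ∀ n, g₀ * n ≤ g n)
    (a b : ℝ) (ha : 0 < a)
    (d l : ℕ)
    (p : BoxSite d l → ℝ) (hp : ∀ x, p x ∈ Set.Icc a b)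
    (φ : ℝ) (hφ : 0 < φ)
    (f : (BoxSite d l → ℕ) → ℝ) (hf0 : ∀ η, 0 ≤ f η) :
    dirBox g p φ f = 0 ↔
      ∀ η ξ : BoxSite d l → ℕ, (∑ x, η x) = (∑ x, ξ x) → f η = f ξ := by
  rw [dirBox_eq_zero_iff hg₀ hgzero hlin (fun x => ha.trans_le (hp x).1) hφ hf0]
  constructor
  · intro h η ξ
    exact eq_of_sum_eq_of_nbrBox_move_invariant fun x y η hxy hx =>
      (h x y hxy η).resolve_left (Nat.one_le_iff_ne_zero.1 hx)
  · intro h x y hxy η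
    rcases Nat.eq_zero_or_pos (η x) with hx | hx
    · exact Or.inl hx
    · exact Or.inr (h _ _ (sum_move (ne_of_nbrBox hxy) hx))

/-- Characterization of densities with vanishing Dirichlet form: `D(f) = 0` iff `f` is
constant along all hyperplanes of a given number of particles. -/
theorem vanishing_dirichlet_form_iff
    (g : ℕ → ℝ) (g₀ gstar : ℝ) (hg₀ : 0 < g₀) (hgs : g₀ ≤ gstar)
    (hgzero : g 0 = 0) (hgpos : ∀ n, 1 ≤ n → 0 < g n)
    (hLip : ∀ n, |g (n + 1) - g n| ≤ gstar)
    (hlin : ∀ n, g₀ * n ≤ g n)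
    (a b : ℝ) (ha : 0 < a) (hab : a < b)
    (d l : ℕ) (hl : 1 ≤ l)
    (p : BoxSite d l → ℝ) (hp : ∀ x, p x ∈ Set.Icc a b)
    (φ : ℝ) (hφ : 0 < φ)
    (f : (BoxSite d l → ℕ) → ℝ) (hf0 : ∀ η, 0 ≤ f η) :
    dirBox g p φ f = 0 ↔
      ∀ η ξ : BoxSite d l → ℕ, (∑ x, η x) = (∑ x, ξ x) → f η = f ξ :=
  vanishing_dirichlet_form_iff_general g g₀ hg₀ hgzero hlin a b ha d l p hp φ hφ f hf0
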